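/- Under monotone missingness with d time points, the available-case (AC) donor restriction, which sets f(x_s | x_{<s}, T=t) = g(x_s | x_{<s}, T ≥ s) for all 0 ≤ t < s ≤ d, is equivalent to the missing-at-random condition that f(T=t | x_{≤d}) depends only on x_{≤t} (i.e., P(T=t | X=x) is a function of the observed history x_{≤t} alone), assuming all densities are strictly positive. -/
import Mathlib


open Finset

/-- Marginal density of the first `s` coordinates on the event `T = t`. -/
def marg {d : ℕ} {α : Type*} [Fintype α] [DecidableEq α]
    (f : (Fin d → α) → ℝ) (s : ℕ) (x : Fin d → α) : ℝ :=
  ∑ z : Fin d → α, if ∀ j : Fin d, (j : ℕ) < s → z j = x j then f z else 0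

section Helpers

variable {d : ℕ} {α : Type*} [Fintype α] [DecidableEq α]

lemma marg_pos (f : (Fin d → α) → ℝ) (hf : ∀ z, 0 < f z) (s : ℕ) (x : Fin d → α) :
    0 < marg f s x := by
  unfold marg
  rw [← Finset.sum_filter]
  refine Finset.sum_pos (fun z _ => hf z) ⟨x, ?_⟩
  simp

lemma marg_congr (f : (Fin d → α) → ℝ) (s : ℕ) {x y : Fin d → α}
    (h : ∀ j : Fin d, (j : ℕ) < s → x j = y j) : marg f s x = marg f s y := by
  unfold marg
  exact Finset.sum_congr rfl fun z _ => if_congr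
    ⟨fun hz j hj => (hz j hj).trans (h j hj),
     fun hz j hj => (hz j hj).trans (h j hj).symm⟩ rfl rfl

lemma marg_of_ge (f : (Fin d → α) → ℝ) {s : ℕ} (hs : d ≤ s) (x : Fin d → α) :
    marg f s x = f x := by
  unfold marg
  have h : ∀ z : Fin d → α, (∀ j : Fin d, (j : ℕ) < s → z j = x j) ↔ z = x := fun z =>
    ⟨fun hz => funext fun j => hz j (lt_of_lt_of_le j.isLt hs), fun hz j _ => by rw [hz]⟩
  simp only [h]
  simp

lemma marg_sum (f : (Fin d → α) → Fin (d + 1) → ℝ) (s : ℕ) (x : Fin d → α) :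
    ∑ t' : Fin (d + 1), marg (fun z => f z t') s x
      = marg (fun z => ∑ t' : Fin (d + 1), f z t') s x := by
  unfold marg
  rw [Finset.sum_comm]
  refine Finset.sum_congr rfl fun z _ => ?_
  by_cases h : ∀ j : Fin d, (j : ℕ) < s → z j = x j <;> simp [h]

/-- `A_s(x) = Σ_{t' ≥ s} marg_{t'} s x`. -/
def Atail (f : (Fin d → α) → Fin (d + 1) → ℝ) (s : ℕ) (x : Fin d → α) : ℝ :=
  ∑ t' : Fin (d + 1), if s ≤ (t' : ℕ) then marg (fun z => f z t') s x else 0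

/-- `B_s(x) = Σ_{t' ≥ s} marg_{t'} (s-1) x`. -/
def Btail (f : (Fin d → α) → Fin (d + 1) → ℝ) (s : ℕ) (x : Fin d → α) : ℝ :=
  ∑ t' : Fin (d + 1), if s ≤ (t' : ℕ) then marg (fun z => f z t') (s - 1) x else 0

lemma Atail_pos (f : (Fin d → α) → Fin (d + 1) → ℝ) (hf : ∀ x t, 0 < f x t)
    {s : ℕ} (hs : s ≤ d) (x : Fin d → α) : 0 < Atail f s x := by
  unfold Atail
  refine Finset.sum_pos' (fun t' _ => ?_) ⟨Fin.last d, Finset.mem_univ _, ?_⟩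
  · split
    · exact (marg_pos _ (fun z => hf z t') _ _).le
    · exact le_refl 0
  · rw [if_pos (by simpa using hs)]
    exact marg_pos _ (fun z => hf z _) _ _

lemma Btail_pos (f : (Fin d → α) → Fin (d + 1) → ℝ) (hf : ∀ x t, 0 < f x t)
    {s : ℕ} (hs : s ≤ d) (x : Fin d → α) : 0 < Btail f s x := by
  unfold Btail
  refine Finset.sum_pos' (fun t' _ => ?_) ⟨Fin.last d, Finset.mem_univ _, ?_⟩
  · split
    · exact (marg_pos _ (fun z => hf z t') _ _).le
    · exact le_refl 0
  · rw [if_pos (by simpa using hs)]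
    exact marg_pos _ (fun z => hf z _) _ _

lemma Atail_congr (f : (Fin d → α) → Fin (d + 1) → ℝ) (s : ℕ) {x y : Fin d → α}
    (h : ∀ j : Fin d, (j : ℕ) < s → x j = y j) : Atail f s x = Atail f s y := by
  unfold Atail
  refine Finset.sum_congr rfl fun t' _ => ?_
  split
  · exact marg_congr _ _ h
  · rfl

lemma Btail_congr (f : (Fin d → α) → Fin (d + 1) → ℝ) (s : ℕ) {x y : Fin d → α}
    (h : ∀ j : Fin d, (j : ℕ) < s - 1 → x j = y j) : Btail f s x = Btail f s y := by
  unfold Btail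
  refine Finset.sum_congr rfl fun t' _ => ?_
  split
  · exact marg_congr _ _ h
  · rfl

lemma tail_split {s : ℕ} (hs : s ≤ d) (g : Fin (d + 1) → ℝ) :
    (∑ t' : Fin (d + 1), if s ≤ (t' : ℕ) then g t' else 0)
      = g ⟨s, by omega⟩ + ∑ t' : Fin (d + 1), if s + 1 ≤ (t' : ℕ) then g t' else 0 := by
  have h : ∀ t' : Fin (d + 1), (if s ≤ (t' : ℕ) then g t' else 0)
      = (if t' = ⟨s, by omega⟩ then g t' else 0)
        + (if s + 1 ≤ (t' : ℕ) then g t' else 0) := by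
    intro t'
    by_cases h1 : (t' : ℕ) = s
    · rw [if_pos (by omega), if_pos (Fin.ext h1), if_neg (by omega)]; ring
    · rw [if_neg (fun he => h1 (congrArg Fin.val he))]
      by_cases h2 : s ≤ (t' : ℕ)
      · rw [if_pos h2, if_pos (by omega)]; ring
      · rw [if_neg h2, if_neg (by omega)]; ring
  rw [Finset.sum_congr rfl fun t' _ => h t', Finset.sum_add_distrib,
    Finset.sum_ite_eq' Finset.univ, if_pos (Finset.mem_univ _)]

lemma tail_last (g : Fin (d + 1) → ℝ) :
    (∑ t' : Fin (d + 1), if d ≤ (t' : ℕ) then g t' else 0) = g (Fin.last d) := by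
  have h : ∀ t' : Fin (d + 1), (if d ≤ (t' : ℕ) then g t' else 0)
      = if t' = Fin.last d then g t' else 0 := by
    intro t'
    have ht := t'.isLt
    by_cases h1 : (t' : ℕ) = d
    · rw [if_pos (by omega), if_pos (Fin.ext h1)]
    · rw [if_neg (by omega), if_neg (fun he => h1 (congrArg Fin.val he))]
  rw [Finset.sum_congr rfl fun t' _ => h t', Finset.sum_ite_eq' Finset.univ,
    if_pos (Finset.mem_univ _)]

lemma prod_Ioc_bot {s e : ℕ} (h : s < e) (g : ℕ → ℝ) :
    (∏ j ∈ Finset.Ioc s e, g j) = g (s + 1) * ∏ j ∈ Finset.Ioc (s + 1) e, g j := by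
  have h1 : Finset.Ioc s e = insert (s + 1) (Finset.Ioc (s + 1) e) := by
    ext j; simp only [Finset.mem_Ioc, Finset.mem_insert]; omega
  rw [h1, Finset.prod_insert (by simp)]

end Helpers

/-- Under monotone missingness with `d` time points and strictly
positive full-data density `f(x,t)`, the available-case (AC) donor restriction
`f(x_s | x_{<s}, T = t) = g(x_s | x_{<s}, T ≥ s)` for all `0 ≤ t < s ≤ d`
is equivalent to missing at random: for each `t`, the function
`x ↦ f(T = t | x) = f(x,t) / Σ_{t'} f(x,t')` depends only on `x_{≤ t}`
(the first `t` coordinates, 0-indexed). Here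
`g(x_s | x_{<s}, T ≥ s) = f(x_{≤s}, T ≥ s) / f(x_{<s}, T ≥ s)` with
`f(x_{≤s}, T ≥ s) = Σ_{t' ≥ s} f(x_{≤s}, T = t')`. -/
theorem available_case_iff_MAR
    {d : ℕ} {α : Type*} [Fintype α] [DecidableEq α]
    (f : (Fin d → α) → Fin (d + 1) → ℝ) (hf : ∀ x t, 0 < f x t) :
    (∀ (t : Fin (d + 1)) (s : ℕ), (t : ℕ) < s → s ≤ d → ∀ x : Fin d → α,
        marg (fun z => f z t) s x / marg (fun z => f z t) (s - 1) x =
          (∑ t' : Fin (d + 1), if s ≤ (t' : ℕ)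
              then marg (fun z => f z t') s x else 0) /
            (∑ t' : Fin (d + 1), if s ≤ (t' : ℕ)
              then marg (fun z => f z t') (s - 1) x else 0))
      ↔
    (∀ (t : Fin (d + 1)) (x y : Fin d → α),
        (∀ j : Fin d, (j : ℕ) < (t : ℕ) → x j = y j) →
        f x t / (∑ t' : Fin (d + 1), f x t') =
          f y t / (∑ t' : Fin (d + 1), f y t')) := by
  constructor
  · -- AC ⇒ MAR
    intro hAC t x y hxy
    have htd : (t : ℕ) ≤ d := Nat.lt_succ_iff.mp t.isLt
    have hmul : ∀ (u : Fin (d + 1)) (s : ℕ), (u : ℕ) < s → s ≤ d → ∀ w : Fin d → α,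
        marg (fun z => f z u) s w * Btail f s w
          = Atail f s w * marg (fun z => f z u) (s - 1) w := by
      intro u s hus hsd w
      have h : marg (fun z => f z u) s w / marg (fun z => f z u) (s - 1) w
          = Atail f s w / Btail f s w := hAC u s hus hsd w
      rwa [div_eq_div_iff (marg_pos _ (fun z => hf z u) _ _).ne'
        (Btail_pos f hf hsd w).ne'] at h
    have hT : ∀ (u : Fin (d + 1)) (s : ℕ), (u : ℕ) ≤ s → s ≤ d → ∀ w : Fin d → α,
        marg (fun z => f z u) s w * ∏ j ∈ Ioc (u : ℕ) s, Btail f j w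
          = marg (fun z => f z u) (u : ℕ) w * ∏ j ∈ Ioc (u : ℕ) s, Atail f j w := by
      intro u s hus
      induction s, hus using Nat.le_induction with
      | base => intro _ w; simp
      | succ s hs ih =>
        intro hsd w
        have ih' := ih (by omega) w
        have h := hmul u (s + 1) (by omega) hsd w
        simp only [Nat.add_sub_cancel] at h
        rw [Finset.prod_Ioc_succ_top hs, Finset.prod_Ioc_succ_top hs]
        linear_combination (∏ j ∈ Ioc (u : ℕ) s, Btail f j w) * h
          + Atail f (s + 1) w * ih'
    have hClaim : ∀ n : ℕ, n ≤ d → ∀ w : Fin d → α,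
        (∑ t' : Fin (d + 1), if d - n ≤ (t' : ℕ) then f w t' else 0)
            * ∏ j ∈ Ioc (d - n) d, Btail f j w
          = Atail f (d - n) w * ∏ j ∈ Ioc (d - n) d, Atail f j w := by
      intro n
      induction n with
      | zero =>
        intro _ w
        simp only [Nat.sub_zero, Finset.Ioc_self, Finset.prod_empty, mul_one]
        have h1 : (∑ t' : Fin (d + 1), if d ≤ (t' : ℕ) then f w t' else 0)
            = f w (Fin.last d) := tail_last _
        have h2 : Atail f d w = f w (Fin.last d) := by
          unfold Atail
          rw [tail_last (fun t' => marg (fun z => f z t') d w)]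
          exact marg_of_ge _ le_rfl w
        rw [h1, h2]
      | succ n ih =>
        intro hn w
        have ih' := ih (by omega) w
        have hsS : d - (n + 1) < d + 1 := by omega
        set s := d - (n + 1) with hsdef
        have hdn : d - n = s + 1 := by omega
        rw [hdn] at ih'
        have hsplitS : (∑ t' : Fin (d + 1), if s ≤ (t' : ℕ) then f w t' else 0)
            = f w ⟨s, hsS⟩ + ∑ t' : Fin (d + 1), if s + 1 ≤ (t' : ℕ) then f w t' else 0 :=
          tail_split (by omega) _
        have hsplitA : Atail f s w
            = marg (fun z => f z ⟨s, hsS⟩) s w + Btail f (s + 1) w := by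
          have h := tail_split (d := d) (s := s) (by omega)
            (fun t' => marg (fun z => f z t') s w)
          unfold Atail Btail
          simp only [Nat.add_sub_cancel]
          exact h
        have hprodB : (∏ j ∈ Ioc s d, Btail f j w)
            = Btail f (s + 1) w * ∏ j ∈ Ioc (s + 1) d, Btail f j w :=
          prod_Ioc_bot (by omega) _
        have hprodA : (∏ j ∈ Ioc s d, Atail f j w)
            = Atail f (s + 1) w * ∏ j ∈ Ioc (s + 1) d, Atail f j w :=
          prod_Ioc_bot (by omega) _
        have hT' : marg (fun z => f z ⟨s, hsS⟩) d w * ∏ j ∈ Ioc s d, Btail f j w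
            = marg (fun z => f z ⟨s, hsS⟩) s w * ∏ j ∈ Ioc s d, Atail f j w :=
          hT ⟨s, hsS⟩ d (show s ≤ d by omega) le_rfl w
        rw [marg_of_ge _ le_rfl w] at hT'
        rw [hsplitS, hsplitA, hprodB, hprodA]
        rw [hprodB, hprodA] at hT'
        linear_combination hT' + Btail f (s + 1) w * ih'
    -- now conclude MAR
    have hFx : (0:ℝ) < ∑ t' : Fin (d + 1), f x t' :=
      Finset.sum_pos (fun u _ => hf x u) Finset.univ_nonempty
    have hFy : (0:ℝ) < ∑ t' : Fin (d + 1), f y t' :=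
      Finset.sum_pos (fun u _ => hf y u) Finset.univ_nonempty
    have hTx : f x t * ∏ j ∈ Ioc (t : ℕ) d, Btail f j x
        = marg (fun z => f z t) (t : ℕ) x * ∏ j ∈ Ioc (t : ℕ) d, Atail f j x := by
      have h := hT t d htd le_rfl x
      rwa [marg_of_ge _ le_rfl] at h
    have hTy : f y t * ∏ j ∈ Ioc (t : ℕ) d, Btail f j y
        = marg (fun z => f z t) (t : ℕ) y * ∏ j ∈ Ioc (t : ℕ) d, Atail f j y := by
      have h := hT t d htd le_rfl y
      rwa [marg_of_ge _ le_rfl] at h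
    have hm : marg (fun z => f z t) (t : ℕ) x = marg (fun z => f z t) (t : ℕ) y :=
      marg_congr _ _ hxy
    rw [hm] at hTx
    have hCx : (∑ t' : Fin (d + 1), f x t')
          * ((∏ j ∈ Ioc 0 (t : ℕ), Btail f j x) * ∏ j ∈ Ioc (t : ℕ) d, Btail f j x)
        = Atail f 0 x
          * ((∏ j ∈ Ioc 0 (t : ℕ), Atail f j x) * ∏ j ∈ Ioc (t : ℕ) d, Atail f j x) := by
      have h := hClaim d le_rfl x
      simp only [Nat.sub_self] at h
      have h2 : (∑ t' : Fin (d + 1), if 0 ≤ (t' : ℕ) then f x t' else 0)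
          = ∑ t' : Fin (d + 1), f x t' :=
        Finset.sum_congr rfl fun t' _ => if_pos (Nat.zero_le _)
      rw [h2] at h
      rw [← Finset.prod_Ioc_consecutive (fun j => Btail f j x) (Nat.zero_le _) htd,
        ← Finset.prod_Ioc_consecutive (fun j => Atail f j x) (Nat.zero_le _) htd] at h
      exact h
    have hCy : (∑ t' : Fin (d + 1), f y t')
          * ((∏ j ∈ Ioc 0 (t : ℕ), Btail f j y) * ∏ j ∈ Ioc (t : ℕ) d, Btail f j y)
        = Atail f 0 y
          * ((∏ j ∈ Ioc 0 (t : ℕ), Atail f j y) * ∏ j ∈ Ioc (t : ℕ) d, Atail f j y) := by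
      have h := hClaim d le_rfl y
      simp only [Nat.sub_self] at h
      have h2 : (∑ t' : Fin (d + 1), if 0 ≤ (t' : ℕ) then f y t' else 0)
          = ∑ t' : Fin (d + 1), f y t' :=
        Finset.sum_congr rfl fun t' _ => if_pos (Nat.zero_le _)
      rw [h2] at h
      rw [← Finset.prod_Ioc_consecutive (fun j => Btail f j y) (Nat.zero_le _) htd,
        ← Finset.prod_Ioc_consecutive (fun j => Atail f j y) (Nat.zero_le _) htd] at h
      exact h
    have hPB : (∏ j ∈ Ioc 0 (t : ℕ), Btail f j x) = ∏ j ∈ Ioc 0 (t : ℕ), Btail f j y :=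
      Finset.prod_congr rfl fun j hj => Btail_congr f j fun j' hj' => hxy j' (by
        have := (Finset.mem_Ioc.mp hj).2; omega)
    have hPA : (∏ j ∈ Ioc 0 (t : ℕ), Atail f j x) = ∏ j ∈ Ioc 0 (t : ℕ), Atail f j y :=
      Finset.prod_congr rfl fun j hj => Atail_congr f j fun j' hj' => hxy j' (by
        have := (Finset.mem_Ioc.mp hj).2; omega)
    have hA0 : Atail f 0 x = Atail f 0 y :=
      Atail_congr f 0 fun j hj => absurd hj (by omega)
    rw [hPB, hPA, hA0] at hCx
    have hK : (0:ℝ) < (∏ j ∈ Ioc (t : ℕ) d, Btail f j x)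
        * ((∏ j ∈ Ioc (t : ℕ) d, Btail f j y) * ∏ j ∈ Ioc 0 (t : ℕ), Btail f j y) :=
      mul_pos (Finset.prod_pos fun j hj => Btail_pos f hf (Finset.mem_Ioc.mp hj).2 x)
        (mul_pos (Finset.prod_pos fun j hj => Btail_pos f hf (Finset.mem_Ioc.mp hj).2 y)
          (Finset.prod_pos fun j hj =>
            Btail_pos f hf (le_trans (Finset.mem_Ioc.mp hj).2 htd) y))
    rw [div_eq_div_iff hFx.ne' hFy.ne']
    apply mul_right_cancel₀ hK.ne'
    linear_combination
      ((∑ t' : Fin (d + 1), f y t') * (∏ j ∈ Ioc (t : ℕ) d, Btail f j y)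
        * (∏ j ∈ Ioc 0 (t : ℕ), Btail f j y)) * hTx
      - ((∑ t' : Fin (d + 1), f x t') * (∏ j ∈ Ioc (t : ℕ) d, Btail f j x)
        * (∏ j ∈ Ioc 0 (t : ℕ), Btail f j y)) * hTy
      + (marg (fun z => f z t) (t : ℕ) y * (∏ j ∈ Ioc (t : ℕ) d, Atail f j x)) * hCy
      - (marg (fun z => f z t) (t : ℕ) y * (∏ j ∈ Ioc (t : ℕ) d, Atail f j y)) * hCx
  · -- MAR ⇒ AC
    intro hM t s hts hsd x
    have hFpos : ∀ z : Fin d → α, (0:ℝ) < ∑ u : Fin (d + 1), f z u :=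
      fun z => Finset.sum_pos (fun u _ => hf z u) Finset.univ_nonempty
    have hcross : ∀ (t' : Fin (d + 1)) (z : Fin d → α),
        (∀ j : Fin d, (j : ℕ) < (t' : ℕ) → z j = x j) →
        f z t' * ∑ u : Fin (d + 1), f x u = f x t' * ∑ u : Fin (d + 1), f z u := by
      intro t' z hz
      have h := hM t' z x hz
      rwa [div_eq_div_iff (hFpos z).ne' (hFpos x).ne'] at h
    have key : ∀ (k : ℕ) (t' : Fin (d + 1)), (t' : ℕ) ≤ k →
        marg (fun z => f z t') k x * ∑ u : Fin (d + 1), f x u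
          = f x t' * marg (fun z => ∑ u : Fin (d + 1), f z u) k x := by
      intro k t' hk
      unfold marg
      rw [Finset.sum_mul, Finset.mul_sum]
      refine Finset.sum_congr rfl fun z _ => ?_
      by_cases hz : ∀ j : Fin d, (j : ℕ) < k → z j = x j
      · rw [if_pos hz, if_pos hz]
        exact hcross t' z fun j hj => hz j (lt_of_lt_of_le hj hk)
      · rw [if_neg hz, if_neg hz]; ring
    have hm1 : marg (fun z => f z t) s x * ∑ u : Fin (d + 1), f x u
        = f x t * marg (fun z => ∑ u : Fin (d + 1), f z u) s x :=
      key s t (le_of_lt hts)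
    have hm2 : marg (fun z => f z t) (s - 1) x * ∑ u : Fin (d + 1), f x u
        = f x t * marg (fun z => ∑ u : Fin (d + 1), f z u) (s - 1) x :=
      key (s - 1) t (by omega)
    have hAF : Atail f s x
          + (∑ t' : Fin (d + 1), if s ≤ (t' : ℕ) then 0 else marg (fun z => f z t') s x)
        = marg (fun z => ∑ u : Fin (d + 1), f z u) s x := by
      rw [← marg_sum f s x]
      unfold Atail
      rw [← Finset.sum_add_distrib]
      refine Finset.sum_congr rfl fun t' _ => ?_
      by_cases h : s ≤ (t' : ℕ) <;> simp [h]
    have hBF : Btail f s x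
          + (∑ t' : Fin (d + 1), if s ≤ (t' : ℕ) then 0 else marg (fun z => f z t') (s - 1) x)
        = marg (fun z => ∑ u : Fin (d + 1), f z u) (s - 1) x := by
      rw [← marg_sum f (s - 1) x]
      unfold Btail
      rw [← Finset.sum_add_distrib]
      refine Finset.sum_congr rfl fun t' _ => ?_
      by_cases h : s ≤ (t' : ℕ) <;> simp [h]
    have h1 : (∑ t' : Fin (d + 1), if s ≤ (t' : ℕ) then 0 else marg (fun z => f z t') s x)
          * ∑ u : Fin (d + 1), f x u
        = (∑ t' : Fin (d + 1), if s ≤ (t' : ℕ) then 0 else f x t')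
          * marg (fun z => ∑ u : Fin (d + 1), f z u) s x := by
      rw [Finset.sum_mul, Finset.sum_mul]
      refine Finset.sum_congr rfl fun t' _ => ?_
      by_cases h : s ≤ (t' : ℕ)
      · simp [h]
      · rw [if_neg h, if_neg h]
        exact key s t' (by omega)
    have h2 : (∑ t' : Fin (d + 1), if s ≤ (t' : ℕ) then 0 else marg (fun z => f z t') (s - 1) x)
          * ∑ u : Fin (d + 1), f x u
        = (∑ t' : Fin (d + 1), if s ≤ (t' : ℕ) then 0 else f x t')
          * marg (fun z => ∑ u : Fin (d + 1), f z u) (s - 1) x := by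
      rw [Finset.sum_mul, Finset.sum_mul]
      refine Finset.sum_congr rfl fun t' _ => ?_
      by_cases h : s ≤ (t' : ℕ)
      · simp [h]
      · rw [if_neg h, if_neg h]
        exact key (s - 1) t' (by omega)
    set Fx : ℝ := ∑ u : Fin (d + 1), f x u with hFxdef
    set Ms : ℝ := marg (fun z => ∑ u : Fin (d + 1), f z u) s x with hMsdef
    set Ms' : ℝ := marg (fun z => ∑ u : Fin (d + 1), f z u) (s - 1) x with hMs'def
    set c : ℝ := ∑ t' : Fin (d + 1), if s ≤ (t' : ℕ) then 0 else f x t' with hcdef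
    have hA' : Atail f s x * Fx = (Fx - c) * Ms := by
      linear_combination Fx * hAF - h1
    have hB' : Btail f s x * Fx = (Fx - c) * Ms' := by
      linear_combination Fx * hBF - h2
    show marg (fun z => f z t) s x / marg (fun z => f z t) (s - 1) x
        = Atail f s x / Btail f s x
    rw [div_eq_div_iff (marg_pos _ (fun z => hf z t) _ _).ne'
      (Btail_pos f hf hsd x).ne']
    have hFx0 : (0:ℝ) < Fx := hFpos x
    apply mul_right_cancel₀ (b := Fx * Fx) (mul_pos hFx0 hFx0).ne'
    linear_combination (Btail f s x * Fx) * hm1 + (f x t * Ms) * hB'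
      - (marg (fun z => f z t) (s - 1) x * Fx) * hA' - ((Fx - c) * Ms) * hm2
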